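/- arXiv:1801.04175 — 3 statements merged into one kernel-verified Lean document; each statement's English description precedes it below -/
import Mathlib

section
/- Let Π ∈ ℝ^{n×n} be a symmetric matrix satisfying Π² = Π + F for a symmetric matrix F, let C ⊆ {1,…,n} be an index set with |C| = r ≥ 1, and suppose Π(C,C) = R̃ᵀR̃ + E, where E is a symmetric r×r matrix and R̃ is an r×r upper triangular matrix whose diagonal entries all satisfy r̃_{ii} ≥ δ for some δ > 0. Set ε_H = ‖E‖₂ + ‖F‖₂ and suppose 1 − δ² + ε_H < 1/r. Then Π(C,C) is invertible and ‖Π(C,C)⁻¹‖₂ ≤ (1/r) · 1/(δ² − 1 + 1/r − ε_H). -/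
/-!
Write `A = Π(C,C)` and `μ = r (δ² - 1 + 1/r - ε_H)`. Since `‖Π x‖² = xᵀΠ²x = xᵀΠx + xᵀFx`,
Cauchy–Schwarz gives `xᵀΠx ≤ (1 + ‖F‖) ‖x‖²`; this passes to the principal submatrix `A`, so every
eigenvalue of `A` is at most `1 + ‖F‖`. The diagonal of `R̃ᵀR̃ + E` gives `tr A ≥ r (δ² - ‖E‖)`,
and as the trace is the sum of the `r` eigenvalues, each of them is at least
`tr A - (r - 1)(1 + ‖F‖) ≥ μ > 0`. Hence `xᵀAx ≥ μ ‖x‖²`, so `‖A x‖ ≥ μ ‖x‖`: `A` is invertible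
and `‖A⁻¹‖₂ ≤ 1/μ`.
-/

open Matrix

/-- The spectral norm (largest singular value) of a real matrix: the operator
norm induced by the Euclidean vector norms. -/
noncomputable def specNorm {m n : ℕ} (M : Matrix (Fin m) (Fin n) ℝ) : ℝ :=
  ‖LinearMap.toContinuousLinearMap (Matrix.toEuclideanLin M)‖

open WithLp
open scoped RealInnerProductSpace MatrixOrder ComplexOrder Matrix.Norms.L2Operator

section EuclideanDotProduct

variable {ι : Type*} [Fintype ι]

lemma dotProduct_self_eq_norm_toLp_sq (x : ι → ℝ) : x ⬝ᵥ x = ‖toLp 2 x‖ ^ 2 := by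
  rw [← real_inner_self_eq_norm_sq, EuclideanSpace.inner_toLp_toLp, star_trivial]

lemma abs_dotProduct_le_norm_toLp_mul_norm_toLp (x y : ι → ℝ) :
    |x ⬝ᵥ y| ≤ ‖toLp 2 x‖ * ‖toLp 2 y‖ := by
  simpa [EuclideanSpace.inner_toLp_toLp, dotProduct_comm] using
    abs_real_inner_le_norm (toLp 2 x) (toLp 2 y)

lemma dotProduct_le_norm_toLp_mul_norm_toLp (x y : ι → ℝ) :
    x ⬝ᵥ y ≤ ‖toLp 2 x‖ * ‖toLp 2 y‖ :=
  (le_abs_self _).trans (abs_dotProduct_le_norm_toLp_mul_norm_toLp x y)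

end EuclideanDotProduct

lemma sq_diag_le_transpose_mul_self_diag {ι : Type*} [Fintype ι] (R : Matrix ι ι ℝ) (i : ι) :
    R i i ^ 2 ≤ (Rᵀ * R) i i := by
  rw [mul_apply, sq]
  exact Finset.single_le_sum (f := fun k ↦ R k i * R k i) (fun k _ ↦ mul_self_nonneg _)
    (Finset.mem_univ i)

section SpecNorm

variable {m n : ℕ}

lemma specNorm_nonneg (M : Matrix (Fin m) (Fin n) ℝ) : 0 ≤ specNorm M :=
  norm_nonneg _

lemma norm_toLp_mulVec_le_specNorm (M : Matrix (Fin m) (Fin n) ℝ) (x : Fin n → ℝ) :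
    ‖toLp 2 (M *ᵥ x)‖ ≤ specNorm M * ‖toLp 2 x‖ :=
  -- `specNorm M` is definitionally Mathlib's `L2Operator` norm `‖M‖`.
  M.l2_opNorm_mulVec (toLp 2 x)

lemma abs_dotProduct_mulVec_le_specNorm (M : Matrix (Fin n) (Fin n) ℝ) (x : Fin n → ℝ) :
    |x ⬝ᵥ M *ᵥ x| ≤ specNorm M * (x ⬝ᵥ x) := by
  rw [dotProduct_self_eq_norm_toLp_sq]
  calc |x ⬝ᵥ M *ᵥ x| ≤ ‖toLp 2 x‖ * ‖toLp 2 (M *ᵥ x)‖ :=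
        abs_dotProduct_le_norm_toLp_mul_norm_toLp _ _
    _ ≤ ‖toLp 2 x‖ * (specNorm M * ‖toLp 2 x‖) := by
        gcongr
        exact norm_toLp_mulVec_le_specNorm M x
    _ = specNorm M * ‖toLp 2 x‖ ^ 2 := by ring

lemma abs_diag_le_specNorm (M : Matrix (Fin n) (Fin n) ℝ) (i : Fin n) : |M i i| ≤ specNorm M := by
  simpa using abs_dotProduct_mulVec_le_specNorm M (Pi.single i 1)

lemma dotProduct_mulVec_le_of_mul_self_eq_add {P F : Matrix (Fin n) (Fin n) ℝ}
    (hP : P.IsHermitian) (hPF : P * P = P + F) (x : Fin n → ℝ) :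
    x ⬝ᵥ P *ᵥ x ≤ (1 + specNorm F) * (x ⬝ᵥ x) := by
  have hPx : ‖toLp 2 (P *ᵥ x)‖ ^ 2 ≤ x ⬝ᵥ P *ᵥ x + specNorm F * (x ⬝ᵥ x) := by
    have hPT : Pᵀ = P := by simpa using hP.eq
    rw [← dotProduct_self_eq_norm_toLp_sq, dotProduct_mulVec, ← mulVec_transpose, hPT,
      dotProduct_comm, mulVec_mulVec, hPF, add_mulVec, dotProduct_add]
    linarith [le_of_abs_le (abs_dotProduct_mulVec_le_specNorm F x)]
  have hCS := dotProduct_le_norm_toLp_mul_norm_toLp x (P *ᵥ x)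
  rw [dotProduct_self_eq_norm_toLp_sq] at hPx ⊢
  by_contra! h
  -- With `t = x ⬝ᵥ P *ᵥ x > 0`, squaring `hCS` and inserting `hPx` gives
  -- `t² ≤ ‖x‖² (t + ‖F‖ ‖x‖²)`, which is impossible once `t > (1 + ‖F‖) ‖x‖²`.
  have hsq := pow_le_pow_left₀ (by nlinarith [sq_nonneg ‖toLp 2 x‖]) hCS 2
  nlinarith [mul_le_mul_of_nonneg_left hPx (sq_nonneg ‖toLp 2 x‖),
    mul_nonneg (specNorm_nonneg F) (sq_nonneg ‖toLp 2 x‖)]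

lemma mul_sq_sub_specNorm_le_trace_transpose_mul_self_add {R : Matrix (Fin n) (Fin n) ℝ}
    (E : Matrix (Fin n) (Fin n) ℝ) {δ : ℝ} (hδ : 0 ≤ δ) (hdiag : ∀ i, δ ≤ R i i) :
    n * (δ ^ 2 - specNorm E) ≤ (Rᵀ * R + E).trace := by
  have hdiag' (i : Fin n) : δ ^ 2 - specNorm E ≤ (Rᵀ * R + E) i i := by
    rw [Matrix.add_apply]
    linarith [sq_diag_le_transpose_mul_self_diag R i, (abs_le.1 (abs_diag_le_specNorm E i)).1,
      pow_le_pow_left₀ hδ (hdiag i) 2]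
  calc (n : ℝ) * (δ ^ 2 - specNorm E)
      = ∑ _i : Fin n, (δ ^ 2 - specNorm E) := by
        rw [Finset.sum_const, Finset.card_univ, Fintype.card_fin, nsmul_eq_mul]
    _ ≤ (Rᵀ * R + E).trace := Finset.sum_le_sum fun i _ ↦ hdiag' i

end SpecNorm

lemma sum_sub_card_sub_one_mul_le {ι : Type*} [Fintype ι] [DecidableEq ι] {f : ι → ℝ} {b : ℝ}
    (hf : ∀ j, f j ≤ b) (i : ι) : ∑ j, f j - (Fintype.card ι - 1) * b ≤ f i := by
  have hrest : ∑ j ∈ Finset.univ.erase i, f j ≤ (Fintype.card ι - 1) * b := by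
    have h := Finset.sum_le_card_nsmul (Finset.univ.erase i) f b fun j _ ↦ hf j
    rwa [Finset.card_erase_of_mem (Finset.mem_univ i), Finset.card_univ, nsmul_eq_mul,
      Nat.cast_pred (Fintype.card_pos_iff.2 ⟨i⟩)] at h
  linarith [Finset.add_sum_erase Finset.univ f (Finset.mem_univ i)]

namespace Matrix.IsHermitian

section RCLike

variable {𝕜 ι : Type*} [RCLike 𝕜] [Fintype ι] [DecidableEq ι] {A : Matrix ι ι 𝕜}

lemma le_eigenvalues_iff (hA : A.IsHermitian) (m : ℝ) :
    (∀ i, m ≤ hA.eigenvalues i) ↔ (A - m • 1).PosSemidef := by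
  rw [← le_iff, ← Algebra.algebraMap_eq_smul_one, algebraMap_le_iff_le_spectrum hA,
    hA.spectrum_real_eq_range_eigenvalues, Set.forall_mem_range]

lemma eigenvalues_le_iff (hA : A.IsHermitian) (b : ℝ) :
    (∀ i, hA.eigenvalues i ≤ b) ↔ (b • 1 - A).PosSemidef := by
  rw [← le_iff, ← Algebra.algebraMap_eq_smul_one, le_algebraMap_iff_spectrum_le hA,
    hA.spectrum_real_eq_range_eigenvalues, Set.forall_mem_range]

end RCLike

section Real

variable {ι : Type*} [Fintype ι] [DecidableEq ι] {A : Matrix ι ι ℝ}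

lemma posSemidef_sub_smul_one_iff (hA : A.IsHermitian) (m : ℝ) :
    (A - m • 1).PosSemidef ↔ ∀ x, m * (x ⬝ᵥ x) ≤ x ⬝ᵥ A *ᵥ x := by
  have hH : (A - m • 1).IsSymm := (isHermitian_iff_isSymm.1 hA).sub (isSymm_one.smul m)
  simp [posSemidef_iff_dotProduct_mulVec, hH, sub_mulVec, smul_mulVec, dotProduct_sub]

lemma posSemidef_smul_one_sub_iff (hA : A.IsHermitian) (b : ℝ) :
    (b • 1 - A).PosSemidef ↔ ∀ x, x ⬝ᵥ A *ᵥ x ≤ b * (x ⬝ᵥ x) := by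
  have hH : (b • 1 - A).IsSymm := (isSymm_one.smul b).sub (isHermitian_iff_isSymm.1 hA)
  simp [posSemidef_iff_dotProduct_mulVec, hH, sub_mulVec, smul_mulVec, dotProduct_sub]

lemma trace_sub_le_eigenvalues (hA : A.IsHermitian) {b : ℝ} (hb : ∀ j, hA.eigenvalues j ≤ b)
    (i : ι) : A.trace - (Fintype.card ι - 1) * b ≤ hA.eigenvalues i := by
  have htr : A.trace = ∑ j, hA.eigenvalues j := by simpa using hA.trace_eq_sum_eigenvalues
  rw [htr]
  exact sum_sub_card_sub_one_mul_le hb i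

end Real

end Matrix.IsHermitian

section Coercive

variable {ι : Type*} [Fintype ι] {A : Matrix ι ι ℝ} {m : ℝ}

lemma mul_norm_toLp_le_norm_toLp_mulVec (hA : ∀ x, m * (x ⬝ᵥ x) ≤ x ⬝ᵥ A *ᵥ x) (x : ι → ℝ) :
    m * ‖toLp 2 x‖ ≤ ‖toLp 2 (A *ᵥ x)‖ := by
  have h := (hA x).trans (dotProduct_le_norm_toLp_mul_norm_toLp x (A *ᵥ x))
  rw [dotProduct_self_eq_norm_toLp_sq] at h
  rcases (norm_nonneg (toLp 2 x)).eq_or_lt with h0 | hpos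
  · rw [← h0, mul_zero]
    exact norm_nonneg _
  · exact le_of_mul_le_mul_left (by linarith) hpos

lemma isUnit_of_forall_mul_dotProduct_self_le [DecidableEq ι] (hm : 0 < m)
    (hA : ∀ x, m * (x ⬝ᵥ x) ≤ x ⬝ᵥ A *ᵥ x) : IsUnit A := by
  refine mulVec_injective_iff_isUnit.1 fun x y hxy ↦ ?_
  have h := mul_norm_toLp_le_norm_toLp_mulVec hA (x - y)
  rw [mulVec_sub, hxy, sub_self, toLp_zero, norm_zero, ← mul_zero m] at h
  have h0 := norm_le_zero_iff.1 (le_of_mul_le_mul_left h hm)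
  rwa [toLp_eq_zero, sub_eq_zero] at h0

lemma specNorm_inv_le_of_forall_mul_dotProduct_self_le {r : ℕ} {A : Matrix (Fin r) (Fin r) ℝ}
    (hm : 0 < m) (hA : ∀ x, m * (x ⬝ᵥ x) ≤ x ⬝ᵥ A *ᵥ x) : specNorm A⁻¹ ≤ m⁻¹ := by
  have hdet : IsUnit A.det :=
    (isUnit_iff_isUnit_det A).1 (isUnit_of_forall_mul_dotProduct_self_le hm hA)
  refine ContinuousLinearMap.opNorm_le_bound _ (inv_nonneg.2 hm.le) fun z ↦ ?_
  have h := mul_norm_toLp_le_norm_toLp_mulVec hA (A⁻¹ *ᵥ ofLp z)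
  rw [mulVec_mulVec, mul_nonsing_inv A hdet, one_mulVec, toLp_ofLp] at h
  rw [inv_mul_eq_div, le_div_iff₀ hm, mul_comm]
  simpa [toLpLin_apply] using h

end Coercive

theorem stmt0_general {n r : ℕ} (hr : 1 ≤ r)
    (Pj F : Matrix (Fin n) (Fin n) ℝ) (hPj : Pj.IsHermitian)
    (hPF : Pj * Pj = Pj + F)
    (c : Fin r → Fin n) (hc : Function.Injective c)
    (E Rt : Matrix (Fin r) (Fin r) ℝ)
    (δ : ℝ) (hδ : 0 < δ) (hdiag : ∀ i, δ ≤ Rt i i)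
    (hfact : Pj.submatrix c c = Rtᵀ * Rt + E)
    (εH : ℝ) (hεH : εH = specNorm E + specNorm F)
    (hcond : 1 - δ ^ 2 + εH < 1 / (r : ℝ)) :
    IsUnit (Pj.submatrix c c) ∧
      specNorm (Pj.submatrix c c)⁻¹ ≤
        (1 / (r : ℝ)) * (1 / (δ ^ 2 - 1 + 1 / (r : ℝ) - εH)) := by
  set A := Pj.submatrix c c
  have hA : A.IsHermitian := hPj.submatrix c
  have hupper : ∀ i, hA.eigenvalues i ≤ 1 + specNorm F := by
    refine (hA.eigenvalues_le_iff _).2 ?_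
    -- `((b • 1 - Pj).submatrix c c)` is definitionally `b • (1 : Matrix _ _ ℝ).submatrix c c - A`.
    rw [← submatrix_one c hc]
    exact ((hPj.posSemidef_smul_one_sub_iff _).2
      (dotProduct_mulVec_le_of_mul_self_eq_add hPj hPF)).submatrix c
  have hr0 : (0 : ℝ) < r := by exact_mod_cast hr
  set b := δ ^ 2 - 1 + 1 / (r : ℝ) - εH
  have hlower (i : Fin r) : r * b ≤ hA.eigenvalues i := by
    have htrace := mul_sq_sub_specNorm_le_trace_transpose_mul_self_add E hδ.le hdiag
    rw [← hfact] at htrace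
    have h := hA.trace_sub_le_eigenvalues hupper i
    rw [Fintype.card_fin] at h
    have hrb : r * b = r * (δ ^ 2 - specNorm E) - (r - 1) * (1 + specNorm F) - specNorm F := by
      simp only [b, hεH]
      field_simp
      ring
    linarith [specNorm_nonneg F]
  have hcoer := (hA.posSemidef_sub_smul_one_iff _).1 ((hA.le_eigenvalues_iff _).1 hlower)
  have hb : 0 < r * b := mul_pos hr0 (by linarith)
  refine ⟨isUnit_of_forall_mul_dotProduct_self_le hb hcoer, ?_⟩
  calc specNorm A⁻¹ ≤ (r * b)⁻¹ := specNorm_inv_le_of_forall_mul_dotProduct_self_le hb hcoer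
    _ = 1 / r * (1 / b) := by rw [mul_inv, one_div, one_div]

theorem stmt0 {n r : ℕ} (hr : 1 ≤ r)
    (Pj F : Matrix (Fin n) (Fin n) ℝ) (hPj : Pj.IsHermitian) (hF : F.IsHermitian)
    (hPF : Pj * Pj = Pj + F)
    (c : Fin r → Fin n) (hc : Function.Injective c)
    (E Rt : Matrix (Fin r) (Fin r) ℝ) (hE : E.IsHermitian)
    (hRt : Rt.BlockTriangular id)
    (δ : ℝ) (hδ : 0 < δ) (hdiag : ∀ i, δ ≤ Rt i i)
    (hfact : Pj.submatrix c c = Rtᵀ * Rt + E)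
    (εH : ℝ) (hεH : εH = specNorm E + specNorm F)
    (hcond : 1 - δ ^ 2 + εH < 1 / (r : ℝ)) :
    IsUnit (Pj.submatrix c c) ∧
      specNorm (Pj.submatrix c c)⁻¹ ≤
        (1 / (r : ℝ)) * (1 / (δ ^ 2 - 1 + 1 / (r : ℝ) - εH)) :=
  stmt0_general hr Pj F hPj hPF c hc E Rt δ hδ hdiag hfact εH hεH hcond
end

section
/- Let Π ∈ ℝ^{n×n} be a symmetric matrix satisfying Π² = Π + F for a symmetric matrix F, let C ⊆ {1,…,n} be an index set with |C| = r ≥ 1, and suppose Π(C,C) = R̃ᵀR̃ + E, where E is a symmetric r×r matrix and R̃ is an r×r upper triangular matrix whose diagonal entries all satisfy r̃_{ii} ≥ δ for some δ > 0. Set ε_H = ‖E‖₂ + ‖F‖₂ and suppose 1 − δ² + ε_H < 1/r. Then the n×r matrix Π(:,C) has full column rank and its 2-norm condition number, i.e., the ratio of its largest singular value to its smallest singular value, satisfies κ(Π(:,C)) ≤ (1/r) · (1 + ε_H)/(δ² − 1 + 1/r − ε_H). -/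
open Matrix

/-- The largest singular value of a real matrix `B`, i.e. `max_{‖x‖₂ = 1} ‖Bx‖₂`. -/
noncomputable def sigmaMax {m n : ℕ} (B : Matrix (Fin m) (Fin n) ℝ) : ℝ :=
  sSup {t | ∃ x : EuclideanSpace ℝ (Fin n), ‖x‖ = 1 ∧ t = ‖Matrix.toEuclideanLin B x‖}

/-- The smallest singular value of a real matrix `B`, i.e. `min_{‖x‖₂ = 1} ‖Bx‖₂`. -/
noncomputable def sigmaMin {m n : ℕ} (B : Matrix (Fin m) (Fin n) ℝ) : ℝ :=
  sInf {t | ∃ x : EuclideanSpace ℝ (Fin n), ‖x‖ = 1 ∧ t = ‖Matrix.toEuclideanLin B x‖}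

/-!
Let `B = Π(:,C)`, `A = R̃ᵀR̃`, and let `z ∈ ℝⁿ` be the zero extension of `x ∈ ℝʳ`. Then
`‖Bx‖² = zᵀΠ²z = xᵀΠ(C,C)x + xᵀF(C,C)x`. For `p = zᵀΠz`, Cauchy–Schwarz gives
`p² ≤ ‖Πz‖² ‖z‖² = (p + zᵀFz) ‖z‖²`, hence `p ≤ (1 + ‖F‖₂) ‖z‖²`, and so every eigenvalue of `A`
is at most `1 + ε_H`. As `tr A ≥ r δ²`, the smallest eigenvalue of `A` is then at least
`r δ² - (r - 1)(1 + ε_H)`. Altogether `D ‖x‖² ≤ ‖Bx‖² ≤ (1 + 2 ε_H) ‖x‖²` with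
`D = r (δ² - 1 + 1/r - ε_H) ∈ (0, 1]`, and `√((1 + 2 ε_H) / D) ≤ (1 + ε_H) / D`.
-/

open scoped Matrix.Norms.L2Operator MatrixOrder

theorem specNorm_eq_l2_opNorm {m n : ℕ} (M : Matrix (Fin m) (Fin n) ℝ) : specNorm M = ‖M‖ := rfl

theorem EuclideanSpace.norm_sq_eq_dotProduct {n : Type*} [Fintype n] (x : EuclideanSpace ℝ n) :
    ‖x‖ ^ 2 = x.ofLp ⬝ᵥ x.ofLp := by
  rw [← real_inner_self_eq_norm_sq, EuclideanSpace.inner_eq_star_dotProduct, star_trivial]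

namespace Matrix

variable {m n : Type*} [Fintype m] [Fintype n]

theorem dotProduct_self_nonneg (v : n → ℝ) : 0 ≤ v ⬝ᵥ v := by
  simpa using dotProduct_self_star_nonneg v

theorem isHermitian_transpose_mul_self (R : Matrix n n ℝ) : (Rᵀ * R).IsHermitian :=
  isHermitian_iff_isSymm.mpr (isSymm_transpose_mul_self R)

theorem norm_toEuclideanLin_sq [DecidableEq n] (B : Matrix m n ℝ) (x : EuclideanSpace ℝ n) :
    ‖toEuclideanLin B x‖ ^ 2 = (B *ᵥ x.ofLp) ⬝ᵥ (B *ᵥ x.ofLp) := by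
  rw [EuclideanSpace.norm_sq_eq_dotProduct, toLpLin_apply]

theorem abs_dotProduct_mulVec_le [DecidableEq n] (M : Matrix n n ℝ) (x : n → ℝ) :
    |x ⬝ᵥ M *ᵥ x| ≤ ‖M‖ * (x ⬝ᵥ x) := by
  have hx : ‖WithLp.toLp 2 x‖ ^ 2 = x ⬝ᵥ x := EuclideanSpace.norm_sq_eq_dotProduct _
  calc |x ⬝ᵥ M *ᵥ x| = |inner ℝ (WithLp.toLp 2 x) (WithLp.toLp 2 (M *ᵥ x))| := by
        rw [EuclideanSpace.inner_toLp_toLp, star_trivial, dotProduct_comm]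
    _ ≤ ‖WithLp.toLp 2 x‖ * ‖WithLp.toLp 2 (M *ᵥ x)‖ := abs_real_inner_le_norm _ _
    _ ≤ ‖WithLp.toLp 2 x‖ * (‖M‖ * ‖WithLp.toLp 2 x‖) := by
        gcongr; exact l2_opNorm_mulVec M (WithLp.toLp 2 x)
    _ = ‖M‖ * (x ⬝ᵥ x) := by rw [← hx]; ring

theorem mulVec_dotProduct_mulVec_self (N : Matrix m n ℝ) (x : n → ℝ) :
    (N *ᵥ x) ⬝ᵥ (N *ᵥ x) = x ⬝ᵥ (Nᵀ * N) *ᵥ x := by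
  rw [← mulVec_mulVec, dotProduct_mulVec x, vecMul_transpose]

theorem mulVec_dotProduct_mulVec_self_le_trace (N : Matrix m n ℝ) (x : n → ℝ) :
    (N *ᵥ x) ⬝ᵥ (N *ᵥ x) ≤ (Nᵀ * N).trace * (x ⬝ᵥ x) := by
  have htrace : (Nᵀ * N).trace = ∑ i, ∑ j, N i j ^ 2 := by
    simp only [trace, diag, mul_apply, transpose_apply, sq]
    exact Finset.sum_comm
  calc (N *ᵥ x) ⬝ᵥ (N *ᵥ x) = ∑ i, (∑ j, N i j * x j) ^ 2 := by
        simp only [dotProduct, mulVec, sq]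
    _ ≤ ∑ i, (∑ j, N i j ^ 2) * ∑ j, x j ^ 2 :=
        Finset.sum_le_sum fun i _ ↦ Finset.sum_mul_sq_le_sq_mul_sq _ _ _
    _ = (Nᵀ * N).trace * (x ⬝ᵥ x) := by
        simp only [htrace, ← Finset.sum_mul, dotProduct, sq]

theorem PosSemidef.dotProduct_mulVec_le_trace_mul [DecidableEq n] {M : Matrix n n ℝ}
    (hM : M.PosSemidef) (x : n → ℝ) : x ⬝ᵥ M *ᵥ x ≤ M.trace * (x ⬝ᵥ x) := by
  obtain ⟨N, rfl⟩ := CStarAlgebra.nonneg_iff_eq_star_mul_self.mp hM.nonneg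
  rw [star_eq_conjTranspose, conjTranspose_eq_transpose_of_trivial,
    ← mulVec_dotProduct_mulVec_self]
  exact mulVec_dotProduct_mulVec_self_le_trace N x

section QuadraticFormBoundedAbove

variable [DecidableEq n] {A : Matrix n n ℝ} {L : ℝ} (hL : ∀ x, x ⬝ᵥ A *ᵥ x ≤ L * (x ⬝ᵥ x))
include hL

theorem IsHermitian.posSemidef_smul_one_sub (hA : A.IsHermitian) : (L • 1 - A).PosSemidef := by
  refine .of_dotProduct_mulVec_nonneg ((isHermitian_one.smul (IsSelfAdjoint.all L)).sub hA)
    fun x ↦ ?_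
  simp only [star_trivial, sub_mulVec, smul_mulVec, one_mulVec, dotProduct_sub,
    dotProduct_smul, smul_eq_mul]
  linarith [hL x]

theorem IsHermitian.trace_le_card_mul (hA : A.IsHermitian) : A.trace ≤ Fintype.card n * L := by
  have := (hA.posSemidef_smul_one_sub hL).trace_nonneg
  simp only [trace_sub, trace_smul, trace_one, smul_eq_mul] at this
  linarith

theorem IsHermitian.trace_sub_mul_le_dotProduct_mulVec (hA : A.IsHermitian) (x : n → ℝ) :
    (A.trace - (Fintype.card n - 1) * L) * (x ⬝ᵥ x) ≤ x ⬝ᵥ A *ᵥ x := by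
  have hM := hA.posSemidef_smul_one_sub hL
  have := hM.dotProduct_mulVec_le_trace_mul x
  simp only [trace_sub, trace_smul, trace_one, smul_eq_mul, sub_mulVec, smul_mulVec,
    one_mulVec, dotProduct_sub, dotProduct_smul] at this
  linarith

end QuadraticFormBoundedAbove

section ColumnSelection

variable [DecidableEq m] (c : n → m)

theorem submatrix_id_mulVec (M : Matrix m m ℝ) (v : n → ℝ) :
    M.submatrix id c *ᵥ v = M *ᵥ ((1 : Matrix m m ℝ).submatrix id c *ᵥ v) := by
  rw [mulVec_mulVec]
  simpa using congrArg (· *ᵥ v) (mul_submatrix_one (Equiv.refl m) c M).symm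

theorem dotProduct_submatrix_mulVec (M : Matrix m m ℝ) (v : n → ℝ) :
    v ⬝ᵥ M.submatrix c c *ᵥ v =
      ((1 : Matrix m m ℝ).submatrix id c *ᵥ v) ⬝ᵥ
        M *ᵥ ((1 : Matrix m m ℝ).submatrix id c *ᵥ v) := by
  have hsub : M.submatrix c c = ((1 : Matrix m m ℝ).submatrix id c)ᵀ * M.submatrix id c := by
    ext i j
    simp [mul_apply, one_apply]
  rw [hsub, ← mulVec_mulVec, dotProduct_mulVec, vecMul_transpose, submatrix_id_mulVec c M]

variable {c}

theorem dotProduct_self_submatrix_one_mulVec [DecidableEq n] (hc : Function.Injective c)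
    (v : n → ℝ) :
    ((1 : Matrix m m ℝ).submatrix id c *ᵥ v) ⬝ᵥ ((1 : Matrix m m ℝ).submatrix id c *ᵥ v) =
      v ⬝ᵥ v := by
  simpa [submatrix_one c hc] using (dotProduct_submatrix_mulVec c 1 v).symm

theorem abs_dotProduct_submatrix_mulVec_le [DecidableEq n] (hc : Function.Injective c)
    (M : Matrix m m ℝ) (v : n → ℝ) : |v ⬝ᵥ M.submatrix c c *ᵥ v| ≤ ‖M‖ * (v ⬝ᵥ v) := by
  rw [dotProduct_submatrix_mulVec, ← dotProduct_self_submatrix_one_mulVec hc v]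
  exact abs_dotProduct_mulVec_le M _

end ColumnSelection

section NearProjector

variable {P F : Matrix m m ℝ} (hP : P.IsHermitian) (hPF : P * P = P + F)
include hP hPF

theorem IsHermitian.mulVec_dotProduct_mulVec_self_eq (z : m → ℝ) :
    (P *ᵥ z) ⬝ᵥ (P *ᵥ z) = z ⬝ᵥ P *ᵥ z + z ⬝ᵥ F *ᵥ z := by
  rw [mulVec_dotProduct_mulVec_self, (isHermitian_iff_isSymm.mp hP).eq, hPF, add_mulVec,
    dotProduct_add]

theorem IsHermitian.dotProduct_mulVec_le_one_add_norm [DecidableEq m] (z : m → ℝ) :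
    z ⬝ᵥ P *ᵥ z ≤ (1 + ‖F‖) * (z ⬝ᵥ z) := by
  have hcs : (z ⬝ᵥ P *ᵥ z) ^ 2 ≤ (z ⬝ᵥ z) * ((P *ᵥ z) ⬝ᵥ (P *ᵥ z)) := by
    simpa only [dotProduct, sq] using Finset.sum_mul_sq_le_sq_mul_sq Finset.univ z (P *ᵥ z)
  rw [hP.mulVec_dotProduct_mulVec_self_eq hPF] at hcs
  have hFz := (abs_le.mp (abs_dotProduct_mulVec_le F z)).2
  have hz := dotProduct_self_nonneg z
  have hF := norm_nonneg F
  by_contra! hlt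
  have hp : 0 < z ⬝ᵥ P *ᵥ z := lt_of_le_of_lt (by positivity) hlt
  nlinarith [mul_lt_mul_of_pos_left hlt hp, mul_le_mul_of_nonneg_left hFz hz,
    mul_nonneg (mul_nonneg hF hz) (sub_nonneg.2 hlt.le),
    mul_nonneg (mul_nonneg hF hF) (mul_nonneg hz hz)]

end NearProjector

theorem card_mul_sq_le_trace_transpose_mul_self {R : Matrix n n ℝ} {δ : ℝ} (hδ : 0 ≤ δ)
    (hdiag : ∀ i, δ ≤ R i i) : Fintype.card n * δ ^ 2 ≤ (Rᵀ * R).trace := by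
  calc Fintype.card n * δ ^ 2 = ∑ _i : n, δ ^ 2 := by simp
    _ ≤ ∑ i, R i i ^ 2 := Finset.sum_le_sum fun i _ ↦ pow_le_pow_left₀ hδ (hdiag i) 2
    _ ≤ ∑ i, ∑ k, R k i ^ 2 := Finset.sum_le_sum fun i _ ↦
        Finset.single_le_sum (f := fun k ↦ R k i ^ 2) (fun k _ ↦ sq_nonneg _) (Finset.mem_univ i)
    _ = (Rᵀ * R).trace := by simp [trace, mul_apply, sq]

section ColumnBlock

variable [DecidableEq m] {P F : Matrix m m ℝ} (hP : P.IsHermitian)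
  (hPF : P * P = P + F) {c : n → m} (hc : Function.Injective c)
include hP hPF

theorem IsHermitian.submatrix_id_mulVec_dotProduct_self (v : n → ℝ) :
    (P.submatrix id c *ᵥ v) ⬝ᵥ (P.submatrix id c *ᵥ v) =
      v ⬝ᵥ P.submatrix c c *ᵥ v + v ⬝ᵥ F.submatrix c c *ᵥ v := by
  rw [submatrix_id_mulVec, hP.mulVec_dotProduct_mulVec_self_eq hPF,
    ← dotProduct_submatrix_mulVec, ← dotProduct_submatrix_mulVec]

variable [DecidableEq n]
include hc

theorem IsHermitian.dotProduct_submatrix_mulVec_le_one_add_norm (v : n → ℝ) :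
    v ⬝ᵥ P.submatrix c c *ᵥ v ≤ (1 + ‖F‖) * (v ⬝ᵥ v) := by
  rw [dotProduct_submatrix_mulVec, ← dotProduct_self_submatrix_one_mulVec hc v]
  exact hP.dotProduct_mulVec_le_one_add_norm hPF _

theorem IsHermitian.submatrix_id_mulVec_dotProduct_self_le (v : n → ℝ) :
    (P.submatrix id c *ᵥ v) ⬝ᵥ (P.submatrix id c *ᵥ v) ≤ (1 + 2 * ‖F‖) * (v ⬝ᵥ v) := by
  have hPv := hP.dotProduct_submatrix_mulVec_le_one_add_norm hPF hc v
  have hFv := (abs_le.mp (abs_dotProduct_submatrix_mulVec_le hc F v)).2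
  rw [hP.submatrix_id_mulVec_dotProduct_self hPF]
  linarith

theorem IsHermitian.dotProduct_mulVec_le_of_submatrix_eq_add {A E : Matrix n n ℝ}
    (hfact : P.submatrix c c = A + E) (v : n → ℝ) :
    v ⬝ᵥ A *ᵥ v ≤ (1 + (‖E‖ + ‖F‖)) * (v ⬝ᵥ v) := by
  have hPv := hP.dotProduct_submatrix_mulVec_le_one_add_norm hPF hc v
  have hEv := (abs_le.mp (abs_dotProduct_mulVec_le E v)).1
  rw [hfact, add_mulVec, dotProduct_add] at hPv
  linarith

variable {R E : Matrix n n ℝ} (hfact : P.submatrix c c = Rᵀ * R + E) {δ : ℝ} (hδ : 0 ≤ δ)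
  (hdiag : ∀ i, δ ≤ R i i)
include hfact hδ hdiag

theorem IsHermitian.sq_le_one_add_of_submatrix_eq [Nonempty n] : δ ^ 2 ≤ 1 + (‖E‖ + ‖F‖) := by
  have htr := (card_mul_sq_le_trace_transpose_mul_self hδ hdiag).trans
    ((isHermitian_transpose_mul_self R).trace_le_card_mul
      (hP.dotProduct_mulVec_le_of_submatrix_eq_add hPF hc hfact))
  exact le_of_mul_le_mul_left htr (by exact_mod_cast Fintype.card_pos)

theorem IsHermitian.le_submatrix_id_mulVec_dotProduct_self (v : n → ℝ) :
    (Fintype.card n * δ ^ 2 - (Fintype.card n - 1) * (1 + (‖E‖ + ‖F‖)) - (‖E‖ + ‖F‖)) *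
      (v ⬝ᵥ v) ≤ (P.submatrix id c *ᵥ v) ⬝ᵥ (P.submatrix id c *ᵥ v) := by
  have hRv := (isHermitian_transpose_mul_self R).trace_sub_mul_le_dotProduct_mulVec
    (hP.dotProduct_mulVec_le_of_submatrix_eq_add hPF hc hfact) v
  have htr := mul_le_mul_of_nonneg_right (card_mul_sq_le_trace_transpose_mul_self hδ hdiag)
    (dotProduct_self_nonneg v)
  have hEv := (abs_le.mp (abs_dotProduct_mulVec_le E v)).1
  have hFv := (abs_le.mp (abs_dotProduct_submatrix_mulVec_le hc F v)).1
  rw [hP.submatrix_id_mulVec_dotProduct_self hPF, hfact, add_mulVec, dotProduct_add]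
  linarith

end ColumnBlock

theorem rank_eq_card_of_mul_le_mulVec_dotProduct_self {B : Matrix m n ℝ} {a : ℝ} (ha : 0 < a)
    (h : ∀ v, a * (v ⬝ᵥ v) ≤ (B *ᵥ v) ⬝ᵥ (B *ᵥ v)) : B.rank = Fintype.card n := by
  have hinj : Function.Injective B.mulVecLin := by
    rw [← LinearMap.ker_eq_bot, ker_mulVecLin_eq_bot_iff]
    intro v hv
    have hav := h v
    rw [hv, dotProduct_zero] at hav
    exact dotProduct_self_eq_zero.mp (le_antisymm (nonpos_of_mul_nonpos_right hav ha)
      (dotProduct_self_nonneg v))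
  rw [rank, LinearMap.finrank_range_of_inj hinj, Module.finrank_fintype_fun_eq_card]

end Matrix

section SingularValues

variable {m k : ℕ} {B : Matrix (Fin m) (Fin k) ℝ} {a b : ℝ}

theorem nonempty_unit_image (hk : 0 < k) :
    {t | ∃ x : EuclideanSpace ℝ (Fin k), ‖x‖ = 1 ∧ t = ‖toEuclideanLin B x‖}.Nonempty :=
  ⟨_, EuclideanSpace.single ⟨0, hk⟩ 1, by simp, rfl⟩

theorem sigmaMax_le_sqrt (hk : 0 < k) (h : ∀ v, (B *ᵥ v) ⬝ᵥ (B *ᵥ v) ≤ b * (v ⬝ᵥ v)) :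
    sigmaMax B ≤ √b := by
  refine csSup_le (nonempty_unit_image hk) ?_
  rintro _ ⟨x, hx, rfl⟩
  refine Real.le_sqrt_of_sq_le ?_
  have hxv := h x.ofLp
  rwa [← EuclideanSpace.norm_sq_eq_dotProduct x, hx, one_pow, mul_one,
    ← norm_toEuclideanLin_sq] at hxv

theorem sqrt_le_sigmaMin (hk : 0 < k) (h : ∀ v, a * (v ⬝ᵥ v) ≤ (B *ᵥ v) ⬝ᵥ (B *ᵥ v)) :
    √a ≤ sigmaMin B := by
  refine le_csInf (nonempty_unit_image hk) ?_
  rintro _ ⟨x, hx, rfl⟩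
  refine Real.sqrt_le_iff.mpr ⟨norm_nonneg _, ?_⟩
  have hxv := h x.ofLp
  rwa [← EuclideanSpace.norm_sq_eq_dotProduct x, hx, one_pow, mul_one,
    ← norm_toEuclideanLin_sq] at hxv

theorem sigmaMax_div_sigmaMin_le_sqrt (hk : 0 < k) (ha : 0 < a)
    (hlo : ∀ v, a * (v ⬝ᵥ v) ≤ (B *ᵥ v) ⬝ᵥ (B *ᵥ v))
    (hhi : ∀ v, (B *ᵥ v) ⬝ᵥ (B *ᵥ v) ≤ b * (v ⬝ᵥ v)) :
    sigmaMax B / sigmaMin B ≤ √(b / a) := by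
  rw [Real.sqrt_div' _ ha.le]
  exact div_le_div₀ (Real.sqrt_nonneg _) (sigmaMax_le_sqrt hk hhi) (Real.sqrt_pos.mpr ha)
    (sqrt_le_sigmaMin hk hlo)

end SingularValues

theorem sqrt_div_le_div {ε D : ℝ} (hε : 0 ≤ ε) (hD : 0 < D) (hD1 : D ≤ 1) :
    √((1 + 2 * ε) / D) ≤ (1 + ε) / D := by
  rw [Real.sqrt_le_left (by positivity), div_pow, div_le_div_iff₀ hD (by positivity)]
  nlinarith [mul_le_mul_of_nonneg_left hD1 (by positivity : (0 : ℝ) ≤ (1 + 2 * ε) * D),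
    mul_nonneg (sq_nonneg ε) hD.le]

theorem stmt1_general {n r : ℕ} (hr : 1 ≤ r)
    (Pj F : Matrix (Fin n) (Fin n) ℝ) (hPj : Pj.IsHermitian)
    (hPF : Pj * Pj = Pj + F)
    (c : Fin r → Fin n) (hc : Function.Injective c)
    (E Rt : Matrix (Fin r) (Fin r) ℝ)
    (δ : ℝ) (hδ : 0 < δ) (hdiag : ∀ i, δ ≤ Rt i i)
    (hfact : Pj.submatrix c c = Rtᵀ * Rt + E)
    (εH : ℝ) (hεH : εH = specNorm E + specNorm F)
    (hcond : 1 - δ ^ 2 + εH < 1 / (r : ℝ)) :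
    (Pj.submatrix id c).rank = r ∧
      sigmaMax (Pj.submatrix id c) / sigmaMin (Pj.submatrix id c) ≤
        (1 / (r : ℝ)) * ((1 + εH) / (δ ^ 2 - 1 + 1 / (r : ℝ) - εH)) := by
  have : NeZero r := ⟨by omega⟩
  have hr' : (0 : ℝ) < r := by exact_mod_cast hr
  rw [specNorm_eq_l2_opNorm, specNorm_eq_l2_opNorm] at hεH
  have hε : 0 ≤ εH := hεH ▸ by positivity
  set D := r * δ ^ 2 - (r - 1) * (1 + εH) - εH with hD
  have hden : δ ^ 2 - 1 + 1 / (r : ℝ) - εH = D / r := by rw [hD]; field_simp; ring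
  have hDpos : 0 < D := (div_pos_iff_of_pos_right hr').mp (by linarith)
  have hD1 : D ≤ 1 := by
    have := hPj.sq_le_one_add_of_submatrix_eq hPF hc hfact hδ.le hdiag
    nlinarith
  have hlo (v : Fin r → ℝ) :
      D * (v ⬝ᵥ v) ≤ (Pj.submatrix id c *ᵥ v) ⬝ᵥ (Pj.submatrix id c *ᵥ v) := by
    have := hPj.le_submatrix_id_mulVec_dotProduct_self hPF hc hfact hδ.le hdiag v
    rwa [Fintype.card_fin, ← hεH] at this
  have hhi (v : Fin r → ℝ) :
      (Pj.submatrix id c *ᵥ v) ⬝ᵥ (Pj.submatrix id c *ᵥ v) ≤ (1 + 2 * εH) * (v ⬝ᵥ v) :=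
    (hPj.submatrix_id_mulVec_dotProduct_self_le hPF hc v).trans <|
      mul_le_mul_of_nonneg_right (by linarith [norm_nonneg E]) (dotProduct_self_nonneg v)
  refine ⟨by simpa using rank_eq_card_of_mul_le_mulVec_dotProduct_self hDpos hlo, ?_⟩
  calc _ ≤ √((1 + 2 * εH) / D) := sigmaMax_div_sigmaMin_le_sqrt hr hDpos hlo hhi
    _ ≤ (1 + εH) / D := sqrt_div_le_div hε hDpos hD1
    _ = _ := by rw [hden]; field_simp

theorem stmt1 {n r : ℕ} (hr : 1 ≤ r)
    (Pj F : Matrix (Fin n) (Fin n) ℝ) (hPj : Pj.IsHermitian) (hF : F.IsHermitian)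
    (hPF : Pj * Pj = Pj + F)
    (c : Fin r → Fin n) (hc : Function.Injective c)
    (E Rt : Matrix (Fin r) (Fin r) ℝ) (hE : E.IsHermitian)
    (hRt : Rt.BlockTriangular id)
    (δ : ℝ) (hδ : 0 < δ) (hdiag : ∀ i, δ ≤ Rt i i)
    (hfact : Pj.submatrix c c = Rtᵀ * Rt + E)
    (εH : ℝ) (hεH : εH = specNorm E + specNorm F)
    (hcond : 1 - δ ^ 2 + εH < 1 / (r : ℝ)) :
    (Pj.submatrix id c).rank = r ∧
      sigmaMax (Pj.submatrix id c) / sigmaMin (Pj.submatrix id c) ≤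
        (1 / (r : ℝ)) * ((1 + εH) / (δ ^ 2 - 1 + 1 / (r : ℝ) - εH)) :=
  stmt1_general hr Pj F hPj hPF c hc E Rt δ hδ hdiag hfact εH hεH hcond
end

section
/- Let B ∈ ℝ^{n×n} be a symmetric positive semidefinite matrix of rank r that additionally satisfies B² = B, and suppose P is a permutation matrix and R an n×n upper triangular matrix with PᵀBP = RᵀR, where the diagonal entries R_{ii} are strictly positive for i = 1,…,r and rows r+1,…,n of R are zero. Write the first r rows of R as [R₁ R₂] with R₁ ∈ ℝ^{r×r} and R₂ ∈ ℝ^{r×(n−r)}. Then [R₁ R₂][R₁ R₂]ᵀ = R₁R₁ᵀ + R₂R₂ᵀ = I_r, i.e., the first r rows of R are orthonormal. -/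
/-!
The permuted matrix `C = PᵀBP = RᵀR` is again idempotent. Since the rows of `R` below `r` vanish,
`C = SᵀS` for the block `S = [R₁ R₂]` of its first `r` rows, and `N = SSᵀ` then satisfies
`N³ = S(SᵀS)(SᵀS)Sᵀ = S(SᵀS)Sᵀ = N²`. The triangular block `R₁` has positive diagonal, so it is
invertible, the rows of `S` are linearly independent and `N` is positive definite, hence invertible;
cancelling `N²` gives `N = I`.
-/

open Matrix

namespace Matrix

variable {m n α : Type*} [Fintype m]

lemma isIdempotentElem_transpose_mul_mul [Fintype n] [DecidableEq n] [Semiring α]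
    {P B : Matrix n n α} (hP : P * Pᵀ = 1) (hB : IsIdempotentElem B) :
    IsIdempotentElem (Pᵀ * B * P) := by
  calc Pᵀ * B * P * (Pᵀ * B * P) = Pᵀ * (B * (P * Pᵀ) * B) * P := by simp only [Matrix.mul_assoc]
    _ = Pᵀ * B * P := by rw [hP, Matrix.mul_one, hB.eq]

lemma permMatrix_mul_transpose [Fintype n] [DecidableEq n] [CommSemiring α] (σ : Equiv.Perm n) :
    σ.permMatrix α * (σ.permMatrix α)ᵀ = 1 := by
  simp [← permMatrix_mul]

lemma transpose_mul_self_eq_of_row_eq_zero [Semiring α] {p : m → Prop} [DecidablePred p]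
    (R : Matrix m n α) (hR : ∀ i j, ¬ p i → R i j = 0) :
    (R.submatrix ((↑) : Subtype p → m) id)ᵀ * R.submatrix ((↑) : Subtype p → m) id = Rᵀ * R := by
  ext j k
  simp only [mul_apply, transpose_apply, submatrix_apply, id_eq]
  rw [← Finset.sum_subtype (Finset.univ.filter p) (by simp) (fun i => R i j * R i k),
    Finset.sum_filter_of_ne]
  intro i _ hi
  by_contra hpi
  simp [hR i j hpi] at hi

lemma mul_eq_one_of_isIdempotentElem_of_isUnit [Fintype n] [DecidableEq m] [Semiring α]
    {S : Matrix m n α} {T : Matrix n m α} (hTS : IsIdempotentElem (T * S)) (hST : IsUnit (S * T)) :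
    S * T = 1 := by
  have hcube : S * T * (S * T) * (S * T) = S * T * (S * T) * 1 := by
    calc S * T * (S * T) * (S * T) = S * (T * S * (T * S)) * T := by simp only [Matrix.mul_assoc]
      _ = S * T * (S * T) * 1 := by rw [hTS.eq]; simp only [Matrix.mul_one, Matrix.mul_assoc]
  exact (hST.mul hST).mul_left_cancel hcube

lemma isUnit_mul_transpose_of_isUnit_det_submatrix [Fintype n] [DecidableEq m] (S : Matrix m n ℝ)
    (e : m → n) (he : IsUnit (S.submatrix id e).det) : IsUnit (S * Sᵀ) := by
  have hinj : Function.Injective S.vecMul := by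
    intro v w hvw
    apply vecMul_injective_of_isUnit ((isUnit_iff_isUnit_det _).2 he)
    funext j
    simpa [vecMul, dotProduct] using congrFun hvw (e j)
  simpa using (PosDef.mul_conjTranspose_self S hinj).isUnit

lemma det_pos_of_isUpperTriangular [LinearOrder m] [CommRing α] [PartialOrder α]
    [IsStrictOrderedRing α] {M : Matrix m m α} (hM : M.IsUpperTriangular)
    (hdiag : ∀ i, 0 < M i i) : 0 < M.det := by
  rw [det_of_isUpperTriangular hM]
  exact Finset.prod_pos fun i _ => hdiag i

end Matrix

theorem stmt3_general {n r : ℕ} (B : Matrix (Fin n) (Fin n) ℝ)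
    (hidem : B * B = B)
    (σ : Equiv.Perm (Fin n)) (R : Matrix (Fin n) (Fin n) ℝ)
    (hR : R.BlockTriangular id)
    (hfact : (σ.permMatrix ℝ)ᵀ * B * σ.permMatrix ℝ = Rᵀ * R)
    (hpos : ∀ i : Fin n, (i : ℕ) < r → 0 < R i i)
    (hzero : ∀ i j : Fin n, r ≤ (i : ℕ) → R i j = 0) :
    ∀ i i' : Fin n, (i : ℕ) < r → (i' : ℕ) < r →
      (R * Rᵀ) i i' = if i = i' then 1 else 0 := by
  set S := R.submatrix ((↑) : {i : Fin n // (i : ℕ) < r} → Fin n) id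
  have hC : Sᵀ * S = Rᵀ * R :=
    transpose_mul_self_eq_of_row_eq_zero R fun i j hi => hzero i j (not_lt.1 hi)
  have hSS : IsIdempotentElem (Sᵀ * S) := by
    rw [hC, ← hfact]
    exact isIdempotentElem_transpose_mul_mul (permMatrix_mul_transpose σ) hidem
  have hR₁ : 0 < (S.submatrix id (↑)).det :=
    det_pos_of_isUpperTriangular hR.submatrix fun i => hpos i i.2
  have hN : S * Sᵀ = 1 := mul_eq_one_of_isIdempotentElem_of_isUnit hSS
    (isUnit_mul_transpose_of_isUnit_det_submatrix S _ hR₁.ne'.isUnit)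
  intro i i' hi hi'
  simpa [S, mul_apply, one_apply, Subtype.ext_iff] using congrFun₂ hN ⟨i, hi⟩ ⟨i', hi'⟩

theorem stmt3 {n r : ℕ} (B : Matrix (Fin n) (Fin n) ℝ)
    (hB : B.PosSemidef) (hrank : B.rank = r) (hidem : B * B = B)
    (σ : Equiv.Perm (Fin n)) (R : Matrix (Fin n) (Fin n) ℝ)
    (hR : R.BlockTriangular id)
    (hfact : (σ.permMatrix ℝ)ᵀ * B * σ.permMatrix ℝ = Rᵀ * R)
    (hpos : ∀ i : Fin n, (i : ℕ) < r → 0 < R i i)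
    (hzero : ∀ i j : Fin n, r ≤ (i : ℕ) → R i j = 0) :
    ∀ i i' : Fin n, (i : ℕ) < r → (i' : ℕ) < r →
      (R * Rᵀ) i i' = if i = i' then 1 else 0 :=
  stmt3_general B hidem σ R hR hfact hpos hzero
end
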